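/- In the constant-product AMM system, if the mempool of σ is empty, then MEV equals the arbitrage value extractable(σ) = (√(pr₀·r₀) − √(pr₁·r₁))², where r₀, r₁ are the AMM reserves and pr₀, pr₁ the positive token prices. -/

import Mathlib

open scoped NNReal

/-! A constant-product AMM over two token types τ₀, τ₁ with fixed positive
prices pr₀, pr₁. A swap sending `v > 0` units of token τ returns
`v · r' / (r + v)` units of the other token, where `r`, `r'` are the input and
output reserves, so the product of reserves is invariant. Honest swaps come
from the mempool and carry a minimum-output constraint `vmin`; the adversary
(with unbounded funds) can craft arbitrary swaps. -/

inductive Participant where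
  | Hon : String → Participant
  | Adv : Participant
deriving DecidableEq

inductive Token where
  | τ₀ : Token
  | τ₁ : Token
deriving DecidableEq

/-- The other token type. -/
def Token.other : Token → Token
  | .τ₀ => .τ₁
  | .τ₁ => .τ₀

abbrev TxId := ℕ

/-- A `swap` transaction: participant `P` sends `v > 0` units of token `τ`,
requiring at least `vmin` units of the other token in exchange. -/
structure Tx where
  P : Participant
  v : ℝ
  v_pos : 0 < v
  τ : Token
  vmin : ℝ

/-- The honest part of the system state: AMM reserves `bal`, cumulative honest
wallet `wal`, and the mempool. -/
structure AMMState where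
  bal : Token → ℝ≥0
  wal : Token → ℝ≥0
  mempool : List (TxId × Tx)

/-- System state: adversary wallet plus honest state. -/
structure AMMSys where
  Δ : Token → ℝ
  s : AMMState

/-- Semantics of a swap of `v` units of `τin` by `P` with minimum output `vmin`. -/
noncomputable def swapSem (P : Participant) (v : ℝ) (τin : Token) (vmin : ℝ)
    (σ : AMMSys) : Option AMMSys :=
  let τout := τin.other
  let rin : ℝ := σ.s.bal τin
  let rout : ℝ := σ.s.bal τout
  let x : ℝ := v * rout / (rin + v)
  if 0 < v ∧ (P = .Adv ∨ v ≤ (σ.s.wal τin : ℝ)) ∧ vmin ≤ x ∧ x < rout then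
    some { Δ := if P = .Adv
                then fun τ => σ.Δ τ + (if τ = τout then x else 0)
                                    - (if τ = τin then v else 0)
                else σ.Δ
         , s := { bal := fun τ => if τ = τin then σ.s.bal τin + v.toNNReal
                                  else σ.s.bal τout - x.toNNReal
                , wal := if P = .Adv then σ.s.wal
                         else fun τ => σ.s.wal τ + (if τ = τout then x.toNNReal else 0)
                                               - (if τ = τin then v.toNNReal else 0)
                , mempool := σ.s.mempool } }
  else none

/-- Adversarial moves: craft an adversary-signed swap, or execute a mempool
transaction. -/
inductive Move where
  | adv : (v : ℝ) → 0 < v → (τ : Token) → (vmin : ℝ) → Move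
  | mempool : TxId → Move

/-- Semantics of adversarial moves. A successfully executed mempool transaction
is removed from the mempool. -/
noncomputable def semMove (σ : AMMSys) : Move → Option AMMSys
  | .adv v _ τ vmin => swapSem .Adv v τ vmin σ
  | .mempool id =>
    match σ.s.mempool.find? (fun p => p.1 == id) with
    | none => none
    | some (_, tx) =>
      match swapSem tx.P tx.v tx.τ tx.vmin σ with
      | none => none
      | some σ' =>
        some { Δ := σ'.Δ
             , s := { bal := σ'.s.bal, wal := σ'.s.wal
                    , mempool := σ.s.mempool.filter (fun p => p.1 != id) } }

/-- Composed effect of a list of moves (failing moves are skipped). -/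
noncomputable def semMoves (σ : AMMSys) : List Move → AMMSys
  | [] => σ
  | m :: ms =>
    match semMove σ m with
    | none => semMoves σ ms
    | some σ' => semMoves σ' ms

/-- Adversarial gain of a list of moves, at token prices `pr₀`, `pr₁`. -/
noncomputable def gainMoves (pr₀ pr₁ : ℝ) (σ : AMMSys) (tr : List Move) : ℝ :=
  pr₀ * ((semMoves σ tr).Δ .τ₀ - σ.Δ .τ₀) + pr₁ * ((semMoves σ tr).Δ .τ₁ - σ.Δ .τ₁)

/-- Maximal extractable value. -/
structure MEV (pr₀ pr₁ : ℝ) (σ : AMMSys) (v : ℝ) : Prop where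
  trace_reaches_v : ∃ tr, gainMoves pr₀ pr₁ σ tr = v
  other_traces_worse : ∀ tr, gainMoves pr₀ pr₁ σ tr ≤ v

/-- Least upper bound of the extractable values. -/
structure MEVsup (pr₀ pr₁ : ℝ) (σ : AMMSys) (v : ℝ) : Prop where
  traces_approx : ∀ ε : ℝ, 0 < ε → ∃ tr, v ≤ gainMoves pr₀ pr₁ σ tr + ε
  other_traces_worse : ∀ tr, gainMoves pr₀ pr₁ σ tr ≤ v

/-- Value extractable by rebalancing the AMM (arbitrage). -/
noncomputable def extractable (pr₀ pr₁ : ℝ) (σ : AMMSys) : ℝ :=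
  (Real.sqrt (pr₀ * (σ.s.bal .τ₀ : ℝ)) - Real.sqrt (pr₁ * (σ.s.bal .τ₁ : ℝ)))^2

/-! With an empty mempool only the adversary's swaps execute. Each keeps the product of the
reserves fixed, and also the amount of each token held jointly by the adversary and the AMM. So
after any trace the reserves `(a, b)` satisfy `a * b = r₀ * r₁`, and the gain is
`pr₀ (r₀ - a) + pr₁ (r₁ - b)`. By AM-GM, `pr₀ a + pr₁ b ≥ 2 √(pr₀ r₀ pr₁ r₁)`, so the gain is at
most `(√(pr₀ r₀) - √(pr₁ r₁))²`. Equality holds when `pr₀ a = pr₁ b`, and a single swap reaches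
that point. -/

namespace Token

lemma other_ne (τ : Token) : τ.other ≠ τ := by
  cases τ <;> simp [Token.other]

lemma eq_or_eq_other (τ τ' : Token) : τ = τ' ∨ τ = τ'.other := by
  cases τ <;> cases τ' <;> simp [Token.other]

lemma apply_mul_apply_other {M : Type*} [CommMagma M] (f : Token → M) (τ : Token) :
    f τ * f τ.other = f .τ₀ * f .τ₁ := by
  cases τ
  · rfl
  · exact mul_comm _ _

def price (pr₀ pr₁ : ℝ) : Token → ℝ
  | .τ₀ => pr₀
  | .τ₁ => pr₁

end Token

noncomputable def swapOutput (v rin rout : ℝ) : ℝ := v * rout / (rin + v)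

section Swap

variable {σ σ' : AMMSys} {v vmin : ℝ} {τin : Token}

lemma swapSem_Adv_isSome (hv : 0 < v) (hin : 0 < (σ.s.bal τin : ℝ))
    (hout : 0 < (σ.s.bal τin.other : ℝ))
    (hvmin : vmin ≤ swapOutput v (σ.s.bal τin) (σ.s.bal τin.other)) :
    (swapSem .Adv v τin vmin σ).isSome := by
  have hlt : swapOutput v (σ.s.bal τin) (σ.s.bal τin.other) < σ.s.bal τin.other := by
    rw [swapOutput, div_lt_iff₀ (by positivity)]
    nlinarith
  simp only [swapSem]
  rw [if_pos ⟨hv, by simp, hvmin, hlt⟩]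
  rfl

lemma swapSem_Adv_eq_some (h : swapSem .Adv v τin vmin σ = some σ') :
    0 < v ∧ σ'.s.mempool = σ.s.mempool ∧
    (σ'.s.bal τin : ℝ) = σ.s.bal τin + v ∧
    (σ'.s.bal τin.other : ℝ) =
      σ.s.bal τin.other - swapOutput v (σ.s.bal τin) (σ.s.bal τin.other) ∧
    σ'.Δ τin = σ.Δ τin - v ∧
    σ'.Δ τin.other = σ.Δ τin.other + swapOutput v (σ.s.bal τin) (σ.s.bal τin.other) := by
  simp only [swapSem, true_or, true_and, if_true] at h
  split at h
  case isFalse => cases h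
  case isTrue hc =>
    obtain ⟨hv, -, hlt⟩ := hc
    cases h
    have hx : 0 ≤ v * σ.s.bal τin.other / (σ.s.bal τin + v) := by positivity
    have hne := Token.other_ne τin
    refine ⟨hv, rfl, ?_, ?_, ?_, ?_⟩
    · simp [hv.le]
    · dsimp only
      have hle : (v * σ.s.bal τin.other / (σ.s.bal τin + v)).toNNReal ≤ σ.s.bal τin.other := by
        rw [← NNReal.coe_le_coe, Real.coe_toNNReal _ hx]
        exact hlt.le
      rw [if_neg hne, NNReal.coe_sub hle, Real.coe_toNNReal _ hx]
      rfl
    · simp [hne.symm]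
    · dsimp only
      rw [if_pos rfl, if_neg hne, sub_zero]
      rfl

end Swap

structure SwapInvariant (σ σ' : AMMSys) : Prop where
  mempool_eq : σ'.s.mempool = σ.s.mempool
  bal_mul_bal : (σ'.s.bal .τ₀ : ℝ) * σ'.s.bal .τ₁ = σ.s.bal .τ₀ * σ.s.bal .τ₁
  Δ_add_bal : ∀ τ, σ'.Δ τ + σ'.s.bal τ = σ.Δ τ + σ.s.bal τ

namespace SwapInvariant

lemma refl (σ : AMMSys) : SwapInvariant σ σ := ⟨rfl, rfl, fun _ => rfl⟩

lemma trans {σ σ' σ'' : AMMSys} (h : SwapInvariant σ σ') (h' : SwapInvariant σ' σ'') :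
    SwapInvariant σ σ'' :=
  ⟨h'.mempool_eq.trans h.mempool_eq, h'.bal_mul_bal.trans h.bal_mul_bal,
    fun τ => (h'.Δ_add_bal τ).trans (h.Δ_add_bal τ)⟩

lemma of_swapSem_Adv {σ σ' : AMMSys} {v vmin : ℝ} {τin : Token}
    (h : swapSem .Adv v τin vmin σ = some σ') : SwapInvariant σ σ' := by
  obtain ⟨hv, hmp, hbin, hbout, hΔin, hΔout⟩ := swapSem_Adv_eq_some h
  refine ⟨hmp, ?_, fun τ => ?_⟩
  · have hpos : (σ.s.bal τin : ℝ) + v ≠ 0 := by positivity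
    rw [← Token.apply_mul_apply_other (fun τ => (σ'.s.bal τ : ℝ)) τin,
      ← Token.apply_mul_apply_other (fun τ => (σ.s.bal τ : ℝ)) τin]
    simp only [hbin, hbout, swapOutput]
    field_simp
    ring
  · rcases τ.eq_or_eq_other τin with rfl | rfl
    · rw [hbin, hΔin]; ring
    · rw [hbout, hΔout]; ring

end SwapInvariant

lemma swapInvariant_semMoves {σ : AMMSys} (hmp : σ.s.mempool = []) (tr : List Move) :
    SwapInvariant σ (semMoves σ tr) := by
  induction tr generalizing σ with
  | nil => exact .refl σ
  | cons m tr ih =>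
    rw [semMoves]
    rcases hm : semMove σ m with _ | σ'
    · exact ih hmp
    · cases m with
      | adv v hv τ vmin =>
        have hσ' := SwapInvariant.of_swapSem_Adv hm
        exact hσ'.trans (ih (hσ'.mempool_eq.trans hmp))
      | mempool id => simp [semMove, hmp] at hm

lemma gain_le_sq_sub_sqrt_of_mul_eq {p₀ p₁ r₀ r₁ a b : ℝ} (hp₀ : 0 ≤ p₀) (hp₁ : 0 ≤ p₁)
    (hr₀ : 0 ≤ r₀) (hr₁ : 0 ≤ r₁) (ha : 0 ≤ a) (hb : 0 ≤ b) (hab : a * b = r₀ * r₁) :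
    p₀ * (r₀ - a) + p₁ * (r₁ - b) ≤ (√(p₀ * r₀) - √(p₁ * r₁)) ^ 2 := by
  have hgeom : √(p₀ * r₀) * √(p₁ * r₁) = √(p₀ * a) * √(p₁ * b) := by
    rw [← Real.sqrt_mul (by positivity), ← Real.sqrt_mul (by positivity)]
    congr 1
    linear_combination -p₀ * p₁ * hab
  have hamgm := two_mul_le_add_sq (√(p₀ * a)) (√(p₁ * b))
  rw [Real.sq_sqrt (by positivity), Real.sq_sqrt (by positivity)] at hamgm
  rw [sub_sq, Real.sq_sqrt (by positivity), Real.sq_sqrt (by positivity), mul_assoc, hgeom]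
  linarith

lemma gainMoves_le_extractable {pr₀ pr₁ : ℝ} (hpr₀ : 0 ≤ pr₀) (hpr₁ : 0 ≤ pr₁) {σ : AMMSys}
    (hmp : σ.s.mempool = []) (tr : List Move) :
    gainMoves pr₀ pr₁ σ tr ≤ extractable pr₀ pr₁ σ := by
  have hinv := swapInvariant_semMoves hmp tr
  have h₀ := hinv.Δ_add_bal .τ₀
  have h₁ := hinv.Δ_add_bal .τ₁
  calc gainMoves pr₀ pr₁ σ tr
      = pr₀ * (σ.s.bal .τ₀ - (semMoves σ tr).s.bal .τ₀)
        + pr₁ * (σ.s.bal .τ₁ - (semMoves σ tr).s.bal .τ₁) := by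
        rw [gainMoves]; congr 2 <;> linarith
    _ ≤ extractable pr₀ pr₁ σ :=
        gain_le_sq_sub_sqrt_of_mul_eq hpr₀ hpr₁ (by positivity) (by positivity)
          (by positivity) (by positivity) hinv.bal_mul_bal

/-- Swapping `v = s (t - s) / p` units, where `s = √(p r)` and `t = √(p' r')`, moves the input
reserve to `a = s t / p`, the point where `p a = p' b`. -/
lemma exists_swap_gain_eq_sq_sub_sqrt {p p' r r' : ℝ} (hp : 0 < p) (hp' : 0 < p')
    (hr : 0 < r) (hr' : 0 < r') (hlt : p * r < p' * r') :
    ∃ v > 0, p' * swapOutput v r r' - p * v = (√(p * r) - √(p' * r')) ^ 2 := by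
  set s := √(p * r) with hs
  set t := √(p' * r') with ht
  have hs0 : 0 < s := Real.sqrt_pos.2 (by positivity)
  have hst : s < t := Real.sqrt_lt_sqrt (by positivity) hlt
  have hr_eq : r = s ^ 2 / p := by rw [hs, Real.sq_sqrt (by positivity)]; field_simp
  have hr'_eq : r' = t ^ 2 / p' := by rw [ht, Real.sq_sqrt (by positivity)]; field_simp
  refine ⟨s * (t - s) / p, by have := sub_pos.2 hst; positivity, ?_⟩
  have ht0 : 0 < t := hs0.trans hst
  have hden : s ^ 2 / p + s * (t - s) / p = s * t / p := by ring
  rw [swapOutput, hr_eq, hr'_eq, hden]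
  field_simp
  ring

lemma gainMoves_eq_price (pr₀ pr₁ : ℝ) (σ : AMMSys) (tr : List Move) (τ : Token) :
    gainMoves pr₀ pr₁ σ tr =
      Token.price pr₀ pr₁ τ * ((semMoves σ tr).Δ τ - σ.Δ τ)
        + Token.price pr₀ pr₁ τ.other * ((semMoves σ tr).Δ τ.other - σ.Δ τ.other) := by
  cases τ
  · rfl
  · exact add_comm _ _

lemma extractable_eq_price (pr₀ pr₁ : ℝ) (σ : AMMSys) (τ : Token) :
    extractable pr₀ pr₁ σ =
      (√(Token.price pr₀ pr₁ τ * σ.s.bal τ)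
        - √(Token.price pr₀ pr₁ τ.other * σ.s.bal τ.other)) ^ 2 := by
  cases τ
  · rfl
  · exact sub_sq_comm _ _

lemma exists_gainMoves_eq_extractable_of_lt {pr₀ pr₁ : ℝ} {σ : AMMSys} (τ : Token)
    (hp : 0 < Token.price pr₀ pr₁ τ) (hp' : 0 < Token.price pr₀ pr₁ τ.other)
    (hr : 0 < (σ.s.bal τ : ℝ)) (hr' : 0 < (σ.s.bal τ.other : ℝ))
    (hlt : Token.price pr₀ pr₁ τ * σ.s.bal τ < Token.price pr₀ pr₁ τ.other * σ.s.bal τ.other) :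
    ∃ tr, gainMoves pr₀ pr₁ σ tr = extractable pr₀ pr₁ σ := by
  obtain ⟨v, hv, hgain⟩ := exists_swap_gain_eq_sq_sub_sqrt hp hp' hr hr' hlt
  obtain ⟨σ', hσ'⟩ := Option.isSome_iff_exists.1 <|
    swapSem_Adv_isSome (vmin := 0) hv hr hr' (by unfold swapOutput; positivity)
  obtain ⟨-, -, -, -, hΔin, hΔout⟩ := swapSem_Adv_eq_some hσ'
  have hsem : semMoves σ [.adv v hv τ 0] = σ' := by
    simp [semMoves, semMove, hσ']
  refine ⟨[.adv v hv τ 0], ?_⟩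
  rw [gainMoves_eq_price _ _ _ _ τ, extractable_eq_price _ _ _ τ, hsem, hΔin, hΔout, ← hgain]
  ring

/-- If the mempool is empty, the MEV of the constant-product AMM is exactly
the arbitrage value `(√(pr₀·r₀) − √(pr₁·r₁))²`. -/
theorem MEV_empty_mempool (pr₀ pr₁ : ℝ) (hpr₀ : 0 < pr₀) (hpr₁ : 0 < pr₁)
    (σ : AMMSys) (hmp : σ.s.mempool = [])
    (hr₀ : 0 < σ.s.bal .τ₀) (hr₁ : 0 < σ.s.bal .τ₁) :
    MEV pr₀ pr₁ σ (extractable pr₀ pr₁ σ) := by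
  have hR₀ : 0 < (σ.s.bal .τ₀ : ℝ) := hr₀
  have hR₁ : 0 < (σ.s.bal .τ₁ : ℝ) := hr₁
  refine ⟨?_, gainMoves_le_extractable hpr₀.le hpr₁.le hmp⟩
  rcases lt_trichotomy (pr₀ * σ.s.bal .τ₀) (pr₁ * σ.s.bal .τ₁) with hlt | heq | hgt
  · exact exists_gainMoves_eq_extractable_of_lt .τ₀ hpr₀ hpr₁ hR₀ hR₁ hlt
  · exact ⟨[], by simp [gainMoves, semMoves, extractable, heq]⟩
  · exact exists_gainMoves_eq_extractable_of_lt .τ₁ hpr₁ hpr₀ hR₁ hR₀ hgt
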